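/- Let X be a topological space with a countable basis B : ℕ → Set X, and let f be a partial multivalued function from Cantor space to ℕ, i.e. f : (ℕ → Bool) → Set ℕ with domain dom f = {p | f p ≠ ∅}. Suppose f is topologically Weihrauch reducible to overt choice for X: there exist a continuous K mapping each p ∈ dom f (Cantor space as a subspace) to a name of some nonempty closed set A_p ⊆ X, and a continuous partial function H into the discrete space ℕ such that H (p, q) ∈ f p whenever p ∈ dom f and q is a name of some point of A_p. Then f has a continuous realizer: there is a continuous F : dom f → ℕ (dom f with the subspace topology of Cantor space, ℕ discrete) with F p ∈ f p for all p ∈ dom f. -/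

import Mathlib

/-! By continuity, `H (p, q)` is determined by a prefix of `p` and a prefix of a name `q` of a
point `x₀ ∈ A_p`. That prefix of `q` only records finitely many basic sets containing `x₀`, so it
is also the start of a name of every point of a suitable basic set `B j ∋ x₀`. Since `B j` meets
`A_p`, some entry of `K p` is `j + 1`, and by continuity of `K` the same holds for all `p'` near
`p`, so that `A_p'` meets `B j` as well. Hence the single value `H (p, q)` lies in `f p'` for all
`p'` near `p` in `dom f`. In Cantor space such local values glue to a locally constant realizer:
at `p` take a value valid on the shortest cylinder around `p` that admits one. -/

/-- `p` enumerates `S` if `S = {n | ∃ k, p k = n + 1}`. -/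
def Enumerates (p : ℕ → ℕ) (S : Set ℕ) : Prop := S = {n | ∃ k, p k = n + 1}

/-- `B : ℕ → Set X` is a countable basis: each `B n` is open and every open set is a
union of sets `B n`. -/
def IsCountableBasis {X : Type*} [TopologicalSpace X] (B : ℕ → Set X) : Prop :=
  (∀ n, IsOpen (B n)) ∧ ∀ U : Set X, IsOpen U → ∃ S : Set ℕ, U = ⋃ n ∈ S, B n

/-- A name of a point `x` is an enumeration of `{n | x ∈ B n}`. -/
def PointName {X : Type*} (B : ℕ → Set X) (x : X) (p : ℕ → ℕ) : Prop :=
  Enumerates p {n | x ∈ B n}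

/-- A name of a closed set `A` is an enumeration of `{n | B n ∩ A ≠ ∅}`. -/
def ClosedName {X : Type*} (B : ℕ → Set X) (A : Set X) (p : ℕ → ℕ) : Prop :=
  Enumerates p {n | (B n ∩ A).Nonempty}

open Filter Topology Set PiNat

open Classical in
noncomputable def canonicalEnum (S : Set ℕ) : ℕ → ℕ := fun k => if k ∈ S then k + 1 else 0

lemma canonicalEnum_eq_add_one_iff {S : Set ℕ} {k m : ℕ} :
    canonicalEnum S k = m + 1 ↔ k = m ∧ m ∈ S := by
  unfold canonicalEnum
  split_ifs with hk <;> grind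

lemma enumerates_canonicalEnum (S : Set ℕ) : Enumerates (canonicalEnum S) S := by
  ext m
  exact ⟨fun hm => ⟨m, canonicalEnum_eq_add_one_iff.mpr ⟨rfl, hm⟩⟩,
    fun ⟨_, hk⟩ => (canonicalEnum_eq_add_one_iff.mp hk).2⟩

lemma Enumerates.splice {p q : ℕ → ℕ} {S : Set ℕ} (hp : Enumerates p S) (M : ℕ)
    (hq : ∀ k < M, ∀ m, q k = m + 1 → m ∈ S) :
    Enumerates (fun k => if k < M then q k else p (k - M)) S := by
  ext m
  constructor
  · intro hm
    obtain ⟨k, hk⟩ : ∃ k, p k = m + 1 := by rwa [hp] at hm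
    exact ⟨k + M, by simpa using hk⟩
  · rintro ⟨k, hk⟩
    dsimp only at hk
    split_ifs at hk with h
    · exact hq k h m hk
    · rw [hp]
      exact ⟨_, hk⟩

lemma IsCountableBasis.exists_mem_subset {X : Type*} [TopologicalSpace X] {B : ℕ → Set X}
    (hB : IsCountableBasis B) {U : Set X} (hU : IsOpen U) {x : X} (hx : x ∈ U) :
    ∃ j, x ∈ B j ∧ B j ⊆ U := by
  obtain ⟨S, rfl⟩ := hB.2 U hU
  obtain ⟨j, hj, hxj⟩ := mem_iUnion₂.mp hx
  exact ⟨j, hxj, subset_biUnion_of_mem hj⟩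

lemma ContinuousWithinAt.eventually_eq_of_discreteTopology {α β : Type*} [TopologicalSpace α]
    [TopologicalSpace β] [DiscreteTopology β] {f : α → β} {s : Set α} {x : α}
    (h : ContinuousWithinAt f s x) : ∀ᶠ y in 𝓝[s] x, f y = f x :=
  h ((isOpen_discrete {f x}).mem_nhds rfl)

namespace PiNat

variable {E : ℕ → Type*}

lemma sInf_cylinder_eq {P : Set (∀ n, E n) → Prop} {x y : ∀ n, E n}
    (hx : ∃ n, P (cylinder x n)) (hy : y ∈ cylinder x (sInf {n | P (cylinder x n)})) :
    sInf {n | P (cylinder y n)} = sInf {n | P (cylinder x n)} := by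
  set N := sInf {n | P (cylinder x n)}
  have hNy : N ∈ {n | P (cylinder y n)} := by
    rw [mem_ofPred_eq, mem_cylinder_iff_eq.mp hy]
    exact Nat.sInf_mem hx
  have hle : sInf {n | P (cylinder y n)} ≤ N := Nat.sInf_le hNy
  refine le_antisymm hle (Nat.sInf_le ?_)
  rw [mem_ofPred_eq, ← mem_cylinder_iff_eq.mp (cylinder_anti x hle hy)]
  exact Nat.sInf_mem ⟨N, hNy⟩

variable [∀ n, TopologicalSpace (E n)] [∀ n, DiscreteTopology (E n)]

lemma cylinder_mem_nhds (x : ∀ n, E n) (n : ℕ) : cylinder x n ∈ 𝓝 x :=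
  (isOpen_cylinder E x n).mem_nhds (self_mem_cylinder x n)

lemma exists_cylinder_subset {x : ∀ n, E n} {s : Set (∀ n, E n)} (hs : s ∈ 𝓝 x) :
    ∃ n, cylinder x n ⊆ s := by
  obtain ⟨t, ⟨y, n, rfl⟩, hx, hts⟩ := (isTopologicalBasis_cylinders E).mem_nhds_iff.mp hs
  exact ⟨n, mem_cylinder_iff_eq.mp hx ▸ hts⟩

theorem exists_continuousOn_selection {β : Type*} [TopologicalSpace β] [Nonempty β]
    {D : Set (∀ n, E n)} {R : (∀ n, E n) → Set β}
    (h : ∀ x ∈ D, ∃ b, ∀ᶠ y in 𝓝[D] x, b ∈ R y) :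
    ∃ F : (∀ n, E n) → β, ContinuousOn F D ∧ ∀ x ∈ D, F x ∈ R x := by
  let P : Set (∀ n, E n) → Prop := fun s => ∃ b, ∀ y ∈ s ∩ D, b ∈ R y
  let N : (∀ n, E n) → ℕ := fun x => sInf {n | P (cylinder x n)}
  let F : (∀ n, E n) → β := fun x =>
    Classical.epsilon fun b => ∀ y ∈ cylinder x (N x) ∩ D, b ∈ R y
  have hP : ∀ x ∈ D, ∃ n, P (cylinder x n) := by
    intro x hx
    obtain ⟨b, hb⟩ := h x hx
    obtain ⟨n, hn⟩ := exists_cylinder_subset (eventually_nhdsWithin_iff.mp hb)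
    exact ⟨n, b, fun y hy => hn hy.1 hy.2⟩
  have hF : ∀ x ∈ D, ∀ y ∈ cylinder x (N x) ∩ D, F x ∈ R y :=
    fun x hx => Classical.epsilon_spec (Nat.sInf_mem (hP x hx))
  refine ⟨F, fun x hx => ?_, fun x hx => hF x hx x ⟨self_mem_cylinder x _, hx⟩⟩
  have hconst : ∀ y ∈ cylinder x (N x), F y = F x := by
    intro y hy
    have hN : N y = N x := sInf_cylinder_eq (hP x hx) hy
    simp only [F, hN, mem_cylinder_iff_eq.mp hy]
  exact (continuousAt_const.congr (eventually_of_mem (cylinder_mem_nhds x _)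
    fun y hy => (hconst y hy).symm)).continuousWithinAt

end PiNat

theorem eventually_mem_of_reducible_to_overt_choice {X P β : Type*} [TopologicalSpace X]
    [TopologicalSpace P] [TopologicalSpace β] [DiscreteTopology β] {B : ℕ → Set X}
    (hB : IsCountableBasis B) {D : Set P} {R : P → Set β} {K : P → ℕ → ℕ} {A : P → Set X}
    {H : P × (ℕ → ℕ) → β} (hK : ContinuousOn K D)
    (hKA : ∀ p ∈ D, ClosedName B (A p) (K p))
    (hH : ContinuousOn H {pq | pq.1 ∈ D ∧ ∃ x ∈ A pq.1, PointName B x pq.2})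
    (hHR : ∀ p ∈ D, ∀ q x, x ∈ A p → PointName B x q → H (p, q) ∈ R p)
    {p₀ : P} (hp₀ : p₀ ∈ D) (hA₀ : (A p₀).Nonempty) :
    ∃ b, ∀ᶠ p in 𝓝[D] p₀, b ∈ R p := by
  classical
  obtain ⟨x₀, hx₀⟩ := hA₀
  set q₀ := canonicalEnum {n | x₀ ∈ B n}
  have hq₀ : PointName B x₀ q₀ := enumerates_canonicalEnum _
  have hHconst : ∀ᶠ pq in 𝓝 p₀ ×ˢ 𝓝 q₀,
      pq ∈ {pq | pq.1 ∈ D ∧ ∃ x ∈ A pq.1, PointName B x pq.2} → H pq = H (p₀, q₀) := by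
    rw [← nhds_prod_eq]
    exact eventually_nhdsWithin_iff.mp
      (hH (p₀, q₀) ⟨hp₀, x₀, hx₀, hq₀⟩).eventually_eq_of_discreteTopology
  obtain ⟨U, hU, V, hV, hUV⟩ := eventually_prod_iff.mp hHconst
  obtain ⟨M, hM⟩ := exists_cylinder_subset hV
  let W : Set X := ⋂ k ∈ (Finset.range M).filter (x₀ ∈ B ·), B k
  have hW : IsOpen W := isOpen_biInter_finset fun k _ => hB.1 k
  obtain ⟨j, hx₀j, hjW⟩ := hB.exists_mem_subset hW (x := x₀) (by simp [W])
  obtain ⟨k₀, hk₀⟩ : ∃ k, K p₀ k = j + 1 := by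
    have hj : j ∈ {n | (B n ∩ A p₀).Nonempty} := ⟨x₀, hx₀j, hx₀⟩
    rwa [hKA p₀ hp₀] at hj
  have hKk₀ : ∀ᶠ p in 𝓝[D] p₀, K p k₀ = j + 1 :=
    hk₀ ▸ ((continuous_apply k₀).continuousAt.comp_continuousWithinAt
      (hK p₀ hp₀)).eventually_eq_of_discreteTopology
  refine ⟨H (p₀, q₀), ?_⟩
  filter_upwards [self_mem_nhdsWithin, hKk₀, nhdsWithin_le_nhds hU] with p hpD hKp hUp
  obtain ⟨x, hxj, hxA⟩ : (B j ∩ A p).Nonempty := by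
    have hj : j ∈ {n | ∃ k, K p k = n + 1} := ⟨k₀, hKp⟩
    rwa [← hKA p hpD] at hj
  -- `q` agrees with `q₀` below `M`, so `(p, q)` lies where `H` is constant
  let q : ℕ → ℕ := fun k => if k < M then q₀ k else canonicalEnum {n | x ∈ B n} (k - M)
  have hq : PointName B x q := by
    refine (enumerates_canonicalEnum _).splice M fun k hk m hkm => ?_
    obtain ⟨rfl, hx₀k⟩ := canonicalEnum_eq_add_one_iff.mp hkm
    exact mem_iInter₂.mp (hjW hxj) k (by simpa using ⟨hk, hx₀k⟩)
  have hqV : V q := hM fun k hk => if_pos hk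
  rw [← hUV hUp hqV ⟨hpD, x, hxA, hq⟩]
  exact hHR p hpD q x hxA hq

theorem continuous_realizer_of_reducible_to_overt_choice
    {X : Type*} [TopologicalSpace X] (B : ℕ → Set X) (hB : IsCountableBasis B)
    (f : (ℕ → Bool) → Set ℕ)
    (hred : ∃ (K : (ℕ → Bool) → (ℕ → ℕ)) (Aset : (ℕ → Bool) → Set X)
        (H : (ℕ → Bool) × (ℕ → ℕ) → ℕ),
      ContinuousOn K {p | (f p).Nonempty} ∧
      (∀ p, (f p).Nonempty →
        (Aset p).Nonempty ∧ IsClosed (Aset p) ∧ ClosedName B (Aset p) (K p)) ∧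
      ContinuousOn H {pq : (ℕ → Bool) × (ℕ → ℕ) |
        (f pq.1).Nonempty ∧ ∃ x ∈ Aset pq.1, PointName B x pq.2} ∧
      (∀ p, (f p).Nonempty → ∀ q x, x ∈ Aset p → PointName B x q → H (p, q) ∈ f p)) :
    ∃ F : (ℕ → Bool) → ℕ, ContinuousOn F {p | (f p).Nonempty} ∧
      ∀ p, (f p).Nonempty → F p ∈ f p := by
  obtain ⟨K, A, H, hK, hA, hH, hHf⟩ := hred
  exact exists_continuousOn_selection fun p hp =>
    eventually_mem_of_reducible_to_overt_choice hB hK (fun p hp => (hA p hp).2.2) hH hHf hp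
      (hA p hp).1
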